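/- arXiv:1502.04904 — 2 statements merged into one kernel-verified Lean document; each statement's English description precedes it below -/
import Mathlib

section
/- Assume S⁰, S¹ : X^{++} → ℤ[X] with {S⁰_μ : μ ∈ X^{++}} linearly independent over ℤ, S¹_ζ = Σ_μ x_{μ,ζ} S⁰_μ, and the factorization S¹_ζ = S¹_{ζ^0+pρ}·(S⁰_{ζ^1+pζ^2+⋯})^{(1)} whenever ζ^1+pζ^2+⋯ ∈ X^{++}. Define S^h inductively by S^h_ζ = Σ_μ x_{μ, ζ^{h−1}+pζ^h+⋯} S^{h−1}_{ζ^0+⋯+p^{h−2}ζ^{h−2}+p^{h−1}μ}. Then for all h ≥ 1 and ζ ∈ X^+ with ζ^h + pζ^{h+1} + p²ζ^{h+2} + ⋯ ∈ X^{++}: S^h_ζ = S¹_{ζ^0+pρ}·(S¹_{ζ^1+pρ})^{(1)} ⋯ (S¹_{ζ^{h−1}+pρ})^{(h−1)} · (S⁰_{ζ^h+pζ^{h+1}+⋯})^{(h)}. -/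
open Finset

/-- Base-`p` digit number `k` of a weight `ζ ∈ ℤ^I` (coordinatewise). -/
def digit (p k : ℕ) {I : Type*} (ζ : I → ℤ) : I → ℤ :=
  fun i => (ζ i / (p : ℤ) ^ k) % (p : ℤ)

/-- The truncated tail `ζ^j + p ζ^{j+1} + p² ζ^{j+2} + ⋯` of the base-`p` expansion. -/
noncomputable def tailFrom (p j : ℕ) {I : Type*} (ζ : I → ℤ) : I → ℤ :=
  fun i => ∑ᶠ k : ℕ, (p : ℤ) ^ k * digit p (j + k) ζ i

/-- Dominant weights `X^+`. -/
def dominant {I : Type*} (ζ : I → ℤ) : Prop := ∀ i, 0 ≤ ζ i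

/-- Strictly dominant weights `X^{++} = X^+ + ρ`. -/
def strictDom {I : Type*} (ζ : I → ℤ) : Prop := ∀ i, 1 ≤ ζ i

/-- `p`-restricted weights `X^+_red`. -/
def restricted (p : ℕ) {I : Type*} (ζ : I → ℤ) : Prop :=
  ∀ i, 0 ≤ ζ i ∧ ζ i ≤ (p : ℤ) - 1

/-- The Weyl vector `ρ` (all coordinates equal to `1` in fundamental weight coordinates). -/
def rho {I : Type*} : I → ℤ := fun _ => 1

/-- The Frobenius twist `ξ ↦ ξ^{(h)}`, sending `e^λ` to `e^{p^h λ}`, as a ring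
homomorphism of the group ring `ℤ[X]`, `X = ℤ^I`. -/
noncomputable def twist (p h : ℕ) {I : Type*} :
    AddMonoidAlgebra ℤ (I → ℤ) →+* AddMonoidAlgebra ℤ (I → ℤ) :=
  AddMonoidAlgebra.mapDomainRingHom ℤ
    (AddMonoidHom.mk' (fun l => ((p : ℤ) ^ h) • l) (fun a b => smul_add _ a b))

/-- The functions `S^h` of no. 4 of the paper, defined inductively from `S¹` by
`S^h_ζ = Σ_{μ ∈ X^{++}} x_{μ, ζ^{h−1}+pζ^h+⋯} · S^{h−1}_{ζ^0+pζ^1+⋯+p^{h−2}ζ^{h−2}+p^{h−1}μ}`,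
where `x_{μ,ζ}` are the coefficients of `S¹` in the basis `S⁰` (extended by zero off
`X^{++}`); by convention `S^0 := S¹`. -/
noncomputable def Sh {I : Type*} (p : ℕ) (x : (I → ℤ) → (I → ℤ) → ℤ)
    (S1 : (I → ℤ) → AddMonoidAlgebra ℤ (I → ℤ)) :
    ℕ → (I → ℤ) → AddMonoidAlgebra ℤ (I → ℤ)
  | 0 => S1
  | 1 => S1
  | (h + 2) => fun ζ => ∑ᶠ μ : I → ℤ, x μ (tailFrom p (h + 1) ζ) •
      Sh p x S1 (h + 1)
        ((∑ j ∈ Finset.range (h + 1), (p : ℤ) ^ j • digit p j ζ) + (p : ℤ) ^ (h + 1) • μ)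

/-! For dominant `ζ` the tail `ζ^h + pζ^{h+1} + ⋯` is just `ζ / p^h`, and the argument of
`S^{h-1}` in the recursion for `S^h_ζ` is the weight `splice p (h-1) ζ μ` whose first `h-1`
digits are those of `ζ` and whose tail is `μ`. By induction on `h`, every summand then
factors as the same product of the first `h-1` twisted factors of `ζ` times `(S⁰_μ)^{(h-1)}`.
Summing over `μ` turns this into `(S¹_τ)^{(h-1)}` for `τ = ζ^{h-1} + pζ^h + ⋯`, and the
factorization hypothesis applied to `τ` splits off the next factor `(S¹_{ζ^{h-1}+pρ})^{(h-1)}`. -/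

namespace Int

variable {b : ℤ}

lemma sum_range_pow_mul_ediv_pow_emod (hb : 0 < b) (n : ℤ) (N : ℕ) :
    ∑ k ∈ Finset.range N, b ^ k * (n / b ^ k % b) = n % b ^ N := by
  induction N with
  | zero => simp
  | succ N ih =>
    rw [sum_range_succ, ih, emod_def, emod_def n, pow_succ,
      ← ediv_ediv_of_nonneg (pow_pos hb N).le, emod_def]
    ring

lemma finsum_pow_mul_ediv_pow_emod (hb : 1 < b) {n : ℤ} (hn : 0 ≤ n) :
    ∑ᶠ k : ℕ, b ^ k * (n / b ^ k % b) = n := by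
  lift b to ℕ using by omega
  lift n to ℕ using hn
  have hlt : ∀ k, n ≤ k → (n : ℤ) < (b : ℤ) ^ k := fun k hk => by
    exact_mod_cast (Nat.lt_pow_self (by omega)).trans_le
      (Nat.pow_le_pow_right (by omega) hk)
  have hsupp : (Function.support fun k : ℕ => (b : ℤ) ^ k * ((n : ℤ) / (b : ℤ) ^ k % b)) ⊆
      Finset.range n := fun k hk => by
    by_contra hkn
    simp [ediv_eq_zero_of_lt (natCast_nonneg n) (hlt k (by simpa using hkn))] at hk
  rw [finsum_eq_sum_of_support_subset _ hsupp, sum_range_pow_mul_ediv_pow_emod (by omega),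
    emod_eq_of_lt (natCast_nonneg n) (hlt n le_rfl)]

lemma add_pow_mul_ediv_pow_emod (hb : 0 < b) (a c : ℤ) {k N : ℕ} (hk : k < N) :
    (a + b ^ N * c) / b ^ k % b = a / b ^ k % b := by
  obtain ⟨m, rfl⟩ := Nat.exists_eq_add_of_lt hk
  rw [show b ^ (k + m + 1) * c = b ^ k * (b * (b ^ m * c)) by ring,
    add_mul_ediv_left _ _ (pow_pos hb k).ne', add_mul_emod_self_left]

lemma emod_pow_add_pow_mul_ediv_pow_emod (hb : 0 < b) (n c : ℤ) {k N : ℕ} (hk : k < N) :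
    (n % b ^ N + b ^ N * c) / b ^ k % b = n / b ^ k % b := by
  rw [add_pow_mul_ediv_pow_emod hb _ _ hk, ← add_pow_mul_ediv_pow_emod hb _ (n / b ^ N) hk,
    emod_add_mul_ediv]

lemma emod_pow_add_pow_mul_ediv_pow (hb : 0 < b) (n c : ℤ) (N : ℕ) :
    (n % b ^ N + b ^ N * c) / b ^ N = c := by
  have hbN := pow_pos hb N
  rw [add_mul_ediv_left _ _ hbN.ne', ediv_eq_zero_of_lt (emod_nonneg _ hbN.ne')
    (emod_lt_of_pos _ hbN), zero_add]

end Int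

def splice {I : Type*} (p N : ℕ) (ζ μ : I → ℤ) : I → ℤ :=
  (fun i => ζ i % (p : ℤ) ^ N) + (p : ℤ) ^ N • μ

section Weights

variable {p : ℕ} {I : Type*}

lemma sum_range_pow_smul_digit (hp : 0 < p) (ζ : I → ℤ) (N : ℕ) :
    ∑ j ∈ range N, (p : ℤ) ^ j • digit p j ζ = fun i => ζ i % (p : ℤ) ^ N := by
  ext i
  simpa [Finset.sum_apply, digit] using Int.sum_range_pow_mul_ediv_pow_emod (by omega) (ζ i) N

lemma digit_splice (hp : 0 < p) (ζ μ : I → ℤ) {k N : ℕ} (hk : k < N) :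
    digit p k (splice p N ζ μ) = digit p k ζ := by
  ext i
  exact Int.emod_pow_add_pow_mul_ediv_pow_emod (by omega) (ζ i) (μ i) hk

lemma dominant_splice (hp : 0 < p) (ζ : I → ℤ) {μ : I → ℤ} (hμ : dominant μ) (N : ℕ) :
    dominant (splice p N ζ μ) := fun i =>
  have hpN : (0 : ℤ) < (p : ℤ) ^ N := pow_pos (by omega) N
  add_nonneg (Int.emod_nonneg _ hpN.ne') (smul_nonneg hpN.le (hμ i))

lemma tailFrom_eq_ediv (hp : 2 ≤ p) {ζ : I → ℤ} (hζ : dominant ζ) (j : ℕ) :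
    tailFrom p j ζ = fun i => ζ i / (p : ℤ) ^ j := by
  ext i
  have hpj : (0 : ℤ) ≤ (p : ℤ) ^ j := by positivity
  rw [tailFrom, ← Int.finsum_pow_mul_ediv_pow_emod (b := p) (by omega)
    (Int.ediv_nonneg (hζ i) hpj)]
  simp only [digit, pow_add, Int.ediv_ediv_of_nonneg hpj]

lemma dominant_tailFrom (hp : 2 ≤ p) {ζ : I → ℤ} (hζ : dominant ζ) (j : ℕ) :
    dominant (tailFrom p j ζ) := by
  rw [tailFrom_eq_ediv hp hζ]
  exact fun i => Int.ediv_nonneg (hζ i) (by positivity)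

lemma tailFrom_splice (hp : 2 ≤ p) (ζ : I → ℤ) {μ : I → ℤ} (hμ : dominant μ) (N : ℕ) :
    tailFrom p N (splice p N ζ μ) = μ := by
  rw [tailFrom_eq_ediv hp (dominant_splice (by omega) ζ hμ N)]
  ext i
  exact Int.emod_pow_add_pow_mul_ediv_pow (by omega) (ζ i) (μ i) N

lemma digit_zero_tailFrom (hp : 2 ≤ p) {ζ : I → ℤ} (hζ : dominant ζ) (j : ℕ) :
    digit p 0 (tailFrom p j ζ) = digit p j ζ := by
  rw [tailFrom_eq_ediv hp hζ]
  ext i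
  simp [digit]

lemma tailFrom_one_tailFrom (hp : 2 ≤ p) {ζ : I → ℤ} (hζ : dominant ζ) (j : ℕ) :
    tailFrom p 1 (tailFrom p j ζ) = tailFrom p (j + 1) ζ := by
  rw [tailFrom_eq_ediv hp (dominant_tailFrom hp hζ j), tailFrom_eq_ediv hp hζ,
    tailFrom_eq_ediv hp hζ]
  ext i
  rw [pow_one, pow_succ, Int.ediv_ediv_of_nonneg (by positivity)]

lemma strictDom_tailFrom_of_succ (hp : 2 ≤ p) {ζ : I → ℤ} (hζ : dominant ζ) {j : ℕ}
    (h : strictDom (tailFrom p (j + 1) ζ)) : strictDom (tailFrom p j ζ) := by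
  rw [← tailFrom_one_tailFrom hp hζ] at h
  intro i
  rw [tailFrom_eq_ediv hp (dominant_tailFrom hp hζ j), pow_one] at h
  exact (h i).trans (Int.ediv_le_self _ (dominant_tailFrom hp hζ j i))

end Weights

section Twist

variable (p : ℕ) {I : Type*}

lemma twist_zero : twist p 0 = RingHom.id (AddMonoidAlgebra ℤ (I → ℤ)) := by
  rw [twist, ← AddMonoidAlgebra.mapDomainRingHom_id]
  congr
  ext l
  simp

lemma twist_twist (a b : ℕ) (ξ : AddMonoidAlgebra ℤ (I → ℤ)) :
    twist p a (twist p b ξ) = twist p (a + b) ξ := by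
  rw [← RingHom.comp_apply, twist, twist, twist, ← AddMonoidAlgebra.mapDomainRingHom_comp]
  congr
  ext l
  simp [pow_add, mul_smul]

end Twist

lemma finsum_zsmul_mul_map {α R S : Type*} [Ring R] [Ring S] (f : R →+* S) (r : S)
    {c : α → ℤ} (hc : c.support.Finite) (g : α → R) :
    ∑ᶠ a, c a • (r * f (g a)) = r * f (∑ᶠ a, c a • g a) := by
  have hsupp := hc.coe_toFinset.ge
  rw [finsum_eq_sum_of_support_subset (fun a => c a • (r * f (g a)))
      ((Function.support_smul_subset_left c _).trans hsupp),
    finsum_eq_sum_of_support_subset (fun a => c a • g a)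
      ((Function.support_smul_subset_left c g).trans hsupp),
    map_sum, Finset.mul_sum]
  simp only [map_zsmul, mul_smul_comm]

noncomputable def twistedProd {I : Type*} (p : ℕ) (S1 : (I → ℤ) → AddMonoidAlgebra ℤ (I → ℤ))
    (N : ℕ) (ζ : I → ℤ) : AddMonoidAlgebra ℤ (I → ℤ) :=
  ∏ j ∈ range N, twist p j (S1 (digit p j ζ + (p : ℤ) • rho))

section Factorization

variable {I : Type*} {p : ℕ}

lemma twistedProd_splice (hp : 0 < p) (S1 : (I → ℤ) → AddMonoidAlgebra ℤ (I → ℤ)) (N : ℕ)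
    (ζ μ : I → ℤ) : twistedProd p S1 N (splice p N ζ μ) = twistedProd p S1 N ζ :=
  prod_congr rfl fun j hj => by rw [digit_splice hp ζ μ (mem_range.mp hj)]

lemma Sh_add_two (hp : 0 < p) (x : (I → ℤ) → (I → ℤ) → ℤ)
    (S1 : (I → ℤ) → AddMonoidAlgebra ℤ (I → ℤ)) (h : ℕ) (ζ : I → ℤ) :
    Sh p x S1 (h + 2) ζ =
      ∑ᶠ μ, x μ (tailFrom p (h + 1) ζ) • Sh p x S1 (h + 1) (splice p (h + 1) ζ μ) := by
  simp only [Sh, sum_range_pow_smul_digit hp, splice]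

theorem Sh_succ_eq_twistedProd_mul (hp : 2 ≤ p) (x : (I → ℤ) → (I → ℤ) → ℤ)
    (S0 S1 : (I → ℤ) → AddMonoidAlgebra ℤ (I → ℤ))
    (hxfin : ∀ ζ : I → ℤ, (Function.support fun μ => x μ ζ).Finite)
    (hxsupp : ∀ μ ζ : I → ℤ, x μ ζ ≠ 0 → strictDom μ)
    (hx : ∀ ζ : I → ℤ, strictDom ζ → S1 ζ = ∑ᶠ μ : I → ℤ, x μ ζ • S0 μ)
    (hfact : ∀ ζ : I → ℤ, dominant ζ → strictDom (tailFrom p 1 ζ) →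
      S1 ζ = S1 (digit p 0 ζ + (p : ℤ) • rho) * twist p 1 (S0 (tailFrom p 1 ζ)))
    (n : ℕ) (ζ : I → ℤ) (hζ : dominant ζ) (htail : strictDom (tailFrom p (n + 1) ζ)) :
    Sh p x S1 (n + 1) ζ =
      twistedProd p S1 (n + 1) ζ * twist p (n + 1) (S0 (tailFrom p (n + 1) ζ)) := by
  induction n generalizing ζ with
  | zero =>
    rw [twistedProd, prod_range_one, twist_zero, RingHom.id_apply]
    exact hfact ζ hζ htail
  | succ n ih =>
    set τ := tailFrom p (n + 1) ζ
    have hτ : dominant τ := dominant_tailFrom hp hζ (n + 1)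
    have hτtail : strictDom (tailFrom p 1 τ) := by rwa [tailFrom_one_tailFrom hp hζ]
    have hterm : ∀ μ, x μ τ • Sh p x S1 (n + 1) (splice p (n + 1) ζ μ) =
        x μ τ • (twistedProd p S1 (n + 1) ζ * twist p (n + 1) (S0 μ)) := by
      intro μ
      by_cases hxμ : x μ τ = 0
      · simp only [hxμ, zero_smul]
      have hμ := hxsupp μ τ hxμ
      have hμdom : dominant μ := fun i => zero_le_one.trans (hμ i)
      rw [ih _ (dominant_splice (by omega) ζ hμdom _) (by rwa [tailFrom_splice hp ζ hμdom]),
        tailFrom_splice hp ζ hμdom, twistedProd_splice (by omega)]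
    rw [Sh_add_two (by omega), finsum_congr hterm, finsum_zsmul_mul_map _ _ (hxfin τ),
      ← hx τ (strictDom_tailFrom_of_succ hp hζ htail), hfact τ hτ hτtail, map_mul, twist_twist,
      digit_zero_tailFrom hp hζ, tailFrom_one_tailFrom hp hζ, twistedProd, twistedProd,
      prod_range_succ _ (n + 1), mul_assoc]

end Factorization

theorem Sh_factorization_general {I : Type*} (p : ℕ) (hp : 2 ≤ p)
    (x : (I → ℤ) → (I → ℤ) → ℤ)
    (S0 S1 : (I → ℤ) → AddMonoidAlgebra ℤ (I → ℤ))
    (hxfin : ∀ ζ : I → ℤ, (Function.support fun μ => x μ ζ).Finite)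
    (hxsupp : ∀ μ ζ : I → ℤ, x μ ζ ≠ 0 → strictDom μ)
    (hx : ∀ ζ : I → ℤ, strictDom ζ → S1 ζ = ∑ᶠ μ : I → ℤ, x μ ζ • S0 μ)
    (hfact : ∀ ζ : I → ℤ, dominant ζ → strictDom (tailFrom p 1 ζ) →
      S1 ζ = S1 (digit p 0 ζ + (p : ℤ) • rho) * twist p 1 (S0 (tailFrom p 1 ζ)))
    (h : ℕ) (hh : 1 ≤ h) (ζ : I → ℤ) (hζ : dominant ζ)
    (htail : strictDom (tailFrom p h ζ)) :
    Sh p x S1 h ζ =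
      (∏ j ∈ Finset.range h, twist p j (S1 (digit p j ζ + (p : ℤ) • rho))) *
        twist p h (S0 (tailFrom p h ζ)) := by
  obtain ⟨n, rfl⟩ := Nat.exists_eq_add_of_le' hh
  exact Sh_succ_eq_twistedProd_mul hp x S0 S1 hxfin hxsupp hx hfact n ζ hζ htail

/-- assume `{S⁰_μ}` linearly independent, `S¹_ζ = Σ_μ x_{μ,ζ} S⁰_μ`
(with `x` finitely supported and supported on `X^{++}`), and the factorization
`S¹_ζ = S¹_{ζ^0+pρ}·(S⁰_{ζ^1+pζ^2+⋯})^{(1)}` whenever `ζ^1+pζ^2+⋯ ∈ X^{++}`.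
Then for all `h ≥ 1` and `ζ ∈ X^+` with `ζ^h + pζ^{h+1} + ⋯ ∈ X^{++}`:
`S^h_ζ = S¹_{ζ^0+pρ}·(S¹_{ζ^1+pρ})^{(1)} ⋯ (S¹_{ζ^{h−1}+pρ})^{(h−1)} · (S⁰_{ζ^h+pζ^{h+1}+⋯})^{(h)}`. -/
theorem Sh_factorization {I : Type*} [Fintype I] (p : ℕ) (hp : 2 ≤ p)
    (x : (I → ℤ) → (I → ℤ) → ℤ)
    (S0 S1 : (I → ℤ) → AddMonoidAlgebra ℤ (I → ℤ))
    (hS0 : LinearIndependent ℤ (fun μ : {μ : I → ℤ // strictDom μ} => S0 μ.1))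
    (hxfin : ∀ ζ : I → ℤ, (Function.support fun μ => x μ ζ).Finite)
    (hxsupp : ∀ μ ζ : I → ℤ, x μ ζ ≠ 0 → strictDom μ)
    (hx : ∀ ζ : I → ℤ, strictDom ζ → S1 ζ = ∑ᶠ μ : I → ℤ, x μ ζ • S0 μ)
    (hfact : ∀ ζ : I → ℤ, dominant ζ → strictDom (tailFrom p 1 ζ) →
      S1 ζ = S1 (digit p 0 ζ + (p : ℤ) • rho) * twist p 1 (S0 (tailFrom p 1 ζ)))
    (h : ℕ) (hh : 1 ≤ h) (ζ : I → ℤ) (hζ : dominant ζ)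
    (htail : strictDom (tailFrom p h ζ)) :
    Sh p x S1 h ζ =
      (∏ j ∈ Finset.range h, twist p j (S1 (digit p j ζ + (p : ℤ) • rho))) *
        twist p h (S0 (tailFrom p h ζ)) :=
  Sh_factorization_general p hp x S0 S1 hxfin hxsupp hx hfact h hh ζ hζ htail
end

section
/- For ζ in the strictly dominant cone X^{++}, the Weyl numerator Σ_{w∈W} ε_w e^{w(ζ)} in ℤ[X] is divisible by the Weyl denominator Σ_{w∈W} ε_w e^{w(ρ)}, and the quotient S⁰_ζ is W-invariant: S⁰_ζ ∈ ℤ[X]^W. -/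
/-- The (multiplicative) group structure on `AddAut A` by composition, as in the older Mathlib
(now `AddAut A` only carries an additive group structure). -/
instance addAutGroupOld (A : Type*) [Add A] : Group (AddAut A) where
  mul g h := AddEquiv.trans h g
  one := AddEquiv.refl _
  inv := AddEquiv.symm
  mul_assoc _ _ _ := rfl
  one_mul _ := rfl
  mul_one _ := rfl
  inv_mul_cancel := AddEquiv.self_trans_symm

/-- The simple reflection `s_i` acting on the weight lattice `X = ℤ^I` written in
fundamental-weight coordinates: `(s_i λ)_j = λ_j − λ_i C_{ij}`, where `C` is the Cartan
matrix (so that the `i`-th simple coroot is the `i`-th coordinate functional). -/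
def simpleRefl {I : Type*} (C : Matrix I I ℤ) (hC : ∀ i, C i i = 2) (i : I) :
    AddAut (I → ℤ) where
  toFun l := fun j => l j - l i * C i j
  invFun l := fun j => l j - l i * C i j
  left_inv l := by funext j; simp [hC i]; ring
  right_inv l := by funext j; simp [hC i]; ring
  map_add' a b := by funext j; simp; ring

/-- The Weyl group `W`, the subgroup of additive automorphisms of `X = ℤ^I` generated by
the simple reflections. -/
def weylGroup {I : Type*} (C : Matrix I I ℤ) (hC : ∀ i, C i i = 2) :
    Subgroup (AddAut (I → ℤ)) :=
  Subgroup.closure (Set.range (simpleRefl C hC))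

/-- The Weyl antisymmetrization `A_ζ = Σ_{w∈W} ε_w e^{w(ζ)} ∈ ℤ[X]`. -/
noncomputable def weylNumerator {I : Type*} (C : Matrix I I ℤ) (hC : ∀ i, C i i = 2)
    [Fintype (weylGroup C hC)] (ε : weylGroup C hC →* ℤˣ) (ζ : I → ℤ) :
    AddMonoidAlgebra ℤ (I → ℤ) :=
  ∑ w : weylGroup C hC, (ε w : ℤ) • AddMonoidAlgebra.single ((w : AddAut (I → ℤ)) ζ) (1 : ℤ)

/-!
The Weyl numerators `A_ζ = Σ_w ε_w e^{wζ}` with `ζ` strictly dominant span the `ε`-anti-invariant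
elements of `ℤ[X]`: such an element vanishes on every orbit through a wall `μ_k = 0`, and every
other orbit contains exactly one strictly dominant weight. For `ν = ζ - ρ` the product
`A_ρ · Σ_{μ ∈ Wν} e^μ` is anti-invariant with coefficient `1` at `ζ`, and every other strictly
dominant weight `η` in its support has `B(η, η) < B(ζ, ζ)` for a `W`-invariant positive definite
form `B`. Induction on `B(ζ, ζ)` then gives `A_ζ = A_ρ q` with `q` invariant.

The facts about orbits used here (one dominant weight in each orbit, trivial stabilizers of
strictly dominant weights, `μ - wμ ∈ ℕ{α_i}` for dominant `μ`) follow from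
`ℓ(w s_i) > ℓ(w) → w α_i ∈ ℕ{α_i}`, which is proved as in Bourbaki by factoring `w` through a
rank-two parabolic subgroup. There the existence of `B` forces `C_ij C_ji < 4`, and the remaining
Cartan matrices, of types `A₁ × A₁`, `A₂`, `B₂` and `G₂`, are checked by computation.
-/

namespace WeylCharacter

variable {I : Type*} {C : Matrix I I ℤ} {hC : ∀ i, C i i = 2}

instance : DistribMulAction (weylGroup C hC) (I → ℤ) where
  smul w x := (w : AddAut (I → ℤ)) x
  one_smul _ := rfl
  mul_smul _ _ _ := rfl
  smul_zero w := map_zero (w : AddAut (I → ℤ))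
  smul_add w := map_add (w : AddAut (I → ℤ))

lemma smul_def (w : weylGroup C hC) (x : I → ℤ) : w • x = (w : AddAut (I → ℤ)) x := rfl

instance : FaithfulSMul (weylGroup C hC) (I → ℤ) :=
  ⟨fun h => Subtype.ext (AddEquiv.ext h)⟩

variable (C) in
def simpleRoot (i : I) : I → ℤ := C i

@[simp]
lemma simpleRoot_apply (i j : I) : simpleRoot C i j = C i j := rfl

variable (C hC) in
def simpleReflection (i : I) : weylGroup C hC :=
  ⟨simpleRefl C hC i, Subgroup.subset_closure (Set.mem_range_self i)⟩

lemma simpleReflection_smul (i : I) (x : I → ℤ) :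
    simpleReflection C hC i • x = x - x i • simpleRoot C i := by
  ext j
  simp [smul_def, simpleReflection, simpleRefl, simpleRoot]

lemma simpleReflection_smul_simpleRoot (i : I) :
    simpleReflection C hC i • simpleRoot C i = -simpleRoot C i := by
  rw [simpleReflection_smul, simpleRoot, hC i]
  module

@[simp]
lemma simpleReflection_mul_self (i : I) :
    simpleReflection C hC i * simpleReflection C hC i = 1 :=
  eq_of_smul_eq_smul fun x : I → ℤ => by
    rw [mul_smul, one_smul, simpleReflection_smul i x, smul_sub, smul_comm,
      simpleReflection_smul_simpleRoot, simpleReflection_smul]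
    module

@[simp]
lemma inv_simpleReflection (i : I) : (simpleReflection C hC i)⁻¹ = simpleReflection C hC i :=
  inv_eq_of_mul_eq_one_right (simpleReflection_mul_self i)

/-! ### Words and lengths -/

variable (C hC) in
def wordProd (l : List I) : weylGroup C hC := (l.map (simpleReflection C hC)).prod

@[simp]
lemma wordProd_nil : wordProd C hC [] = 1 := rfl

@[simp]
lemma wordProd_append (l₁ l₂ : List I) :
    wordProd C hC (l₁ ++ l₂) = wordProd C hC l₁ * wordProd C hC l₂ := by
  simp [wordProd]

@[simp]
lemma wordProd_singleton (i : I) : wordProd C hC [i] = simpleReflection C hC i := by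
  simp [wordProd]

lemma wordProd_reverse (l : List I) : wordProd C hC l.reverse = (wordProd C hC l)⁻¹ := by
  simp [wordProd, List.prod_inv_reverse, List.map_reverse, Function.comp_def]

variable (C hC) in
def parabolic (J : Set I) : Subgroup (weylGroup C hC) :=
  Subgroup.closure (simpleReflection C hC '' J)

lemma simpleReflection_mem_parabolic {J : Set I} {k : I} (hk : k ∈ J) :
    simpleReflection C hC k ∈ parabolic C hC J :=
  Subgroup.subset_closure ⟨k, hk, rfl⟩

lemma wordProd_mem_parabolic {J : Set I} {l : List I} (hl : ∀ k ∈ l, k ∈ J) :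
    wordProd C hC l ∈ parabolic C hC J :=
  Subgroup.list_prod_mem _ (by simpa using fun k hk => simpleReflection_mem_parabolic (hl k hk))

lemma exists_wordProd_of_mem_parabolic {J : Set I} {w : weylGroup C hC}
    (hw : w ∈ parabolic C hC J) : ∃ l : List I, (∀ k ∈ l, k ∈ J) ∧ wordProd C hC l = w := by
  induction hw using Subgroup.closure_induction with
  | mem _ h =>
    obtain ⟨k, hk, rfl⟩ := h
    exact ⟨[k], by simpa using hk, wordProd_singleton k⟩
  | one => exact ⟨[], by simp, rfl⟩
  | mul _ _ _ _ hu hv =>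
    obtain ⟨l₁, hl₁, rfl⟩ := hu
    obtain ⟨l₂, hl₂, rfl⟩ := hv
    exact ⟨l₁ ++ l₂, by simp_all [or_imp], wordProd_append l₁ l₂⟩
  | inv _ _ hu =>
    obtain ⟨l, hl, rfl⟩ := hu
    exact ⟨l.reverse, by simpa using hl, wordProd_reverse l⟩

lemma mem_parabolic_univ (w : weylGroup C hC) : w ∈ parabolic C hC Set.univ := by
  obtain ⟨w, hw⟩ := w
  induction hw using Subgroup.closure_induction with
  | mem _ h =>
    obtain ⟨i, rfl⟩ := h
    exact simpleReflection_mem_parabolic (Set.mem_univ i)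
  | one => exact one_mem _
  | mul _ _ _ _ hx hy => exact mul_mem hx hy
  | inv _ _ hx => exact inv_mem hx

variable (C hC) in
/-- Junk value `0` for `w ∉ parabolic C hC J`. -/
noncomputable def lengthIn (J : Set I) (w : weylGroup C hC) : ℕ :=
  sInf {n | ∃ l : List I, (∀ k ∈ l, k ∈ J) ∧ l.length = n ∧ wordProd C hC l = w}

variable (C hC) in
noncomputable abbrev length (w : weylGroup C hC) : ℕ := lengthIn C hC Set.univ w

section lengthIn

variable {J : Set I}

lemma lengthIn_le {l : List I} (hl : ∀ k ∈ l, k ∈ J) {w : weylGroup C hC}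
    (hw : wordProd C hC l = w) : lengthIn C hC J w ≤ l.length :=
  Nat.sInf_le ⟨l, hl, rfl, hw⟩

lemma exists_reduced_word {w : weylGroup C hC} (hw : w ∈ parabolic C hC J) :
    ∃ l : List I, (∀ k ∈ l, k ∈ J) ∧ l.length = lengthIn C hC J w ∧ wordProd C hC l = w := by
  obtain ⟨l, hl, rfl⟩ := exists_wordProd_of_mem_parabolic hw
  exact Nat.sInf_mem (s := {n | ∃ l' : List I, (∀ k ∈ l', k ∈ J) ∧ l'.length = n ∧
    wordProd C hC l' = wordProd C hC l}) ⟨l.length, l, hl, rfl, rfl⟩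

@[simp]
lemma lengthIn_one : lengthIn C hC J 1 = 0 :=
  Nat.le_zero.1 (lengthIn_le (l := []) (by simp) rfl)

lemma eq_one_of_lengthIn_eq_zero {w : weylGroup C hC} (hw : w ∈ parabolic C hC J)
    (h : lengthIn C hC J w = 0) : w = 1 := by
  obtain ⟨l, -, hl, rfl⟩ := exists_reduced_word hw
  rw [List.length_eq_zero_iff.1 (hl.trans h), wordProd_nil]

lemma lengthIn_mul_le {u v : weylGroup C hC} (hu : u ∈ parabolic C hC J)
    (hv : v ∈ parabolic C hC J) :
    lengthIn C hC J (u * v) ≤ lengthIn C hC J u + lengthIn C hC J v := by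
  obtain ⟨l₁, hl₁, h₁, rfl⟩ := exists_reduced_word hu
  obtain ⟨l₂, hl₂, h₂, rfl⟩ := exists_reduced_word hv
  rw [← h₁, ← h₂, ← List.length_append]
  exact lengthIn_le (by simp_all [or_imp]) (wordProd_append l₁ l₂)

lemma lengthIn_simpleReflection_le {k : I} (hk : k ∈ J) :
    lengthIn C hC J (simpleReflection C hC k) ≤ 1 :=
  lengthIn_le (l := [k]) (by simpa using hk) (wordProd_singleton k)

lemma lengthIn_mul_simpleReflection_le {w : weylGroup C hC} (hw : w ∈ parabolic C hC J)
    {k : I} (hk : k ∈ J) :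
    lengthIn C hC J (w * simpleReflection C hC k) ≤ lengthIn C hC J w + 1 :=
  (lengthIn_mul_le hw (simpleReflection_mem_parabolic hk)).trans
    (Nat.add_le_add_left (lengthIn_simpleReflection_le hk) _)

lemma lengthIn_simpleReflection_mul_le {w : weylGroup C hC} (hw : w ∈ parabolic C hC J)
    {k : I} (hk : k ∈ J) :
    lengthIn C hC J (simpleReflection C hC k * w) ≤ lengthIn C hC J w + 1 :=
  (lengthIn_mul_le (simpleReflection_mem_parabolic hk) hw).trans
    (by have := lengthIn_simpleReflection_le (C := C) (hC := hC) hk; omega)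

lemma exists_lengthIn_mul_simpleReflection {w : weylGroup C hC} (hw : w ∈ parabolic C hC J)
    (h : w ≠ 1) :
    ∃ k ∈ J, lengthIn C hC J (w * simpleReflection C hC k) + 1 = lengthIn C hC J w := by
  obtain ⟨l, hl, hlen, rfl⟩ := exists_reduced_word hw
  obtain ⟨l', k, rfl⟩ : ∃ l' k, l = l' ++ [k] := by
    rcases List.eq_nil_or_concat' l with rfl | ⟨l', k, rfl⟩
    · exact absurd rfl h
    · exact ⟨l', k, rfl⟩
  have hk : k ∈ J := hl k (by simp)
  have hl' : ∀ k ∈ l', k ∈ J := fun k hk' => hl k (by simp [hk'])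
  have hprod : wordProd C hC (l' ++ [k]) * simpleReflection C hC k = wordProd C hC l' := by
    simp [mul_assoc]
  refine ⟨k, hk, le_antisymm ?_ ?_⟩
  · rw [hprod, ← hlen, List.length_append, List.length_singleton]
    exact Nat.add_le_add_right (lengthIn_le hl' rfl) 1
  · have h' := lengthIn_mul_simpleReflection_le (hprod ▸ wordProd_mem_parabolic hl') hk
    rwa [mul_assoc, simpleReflection_mul_self, mul_one] at h'

lemma length_le_lengthIn {w : weylGroup C hC} (hw : w ∈ parabolic C hC J) :
    length C hC w ≤ lengthIn C hC J w := by
  obtain ⟨l, -, hl, rfl⟩ := exists_reduced_word hw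
  exact hl ▸ lengthIn_le (fun _ _ => Set.mem_univ _) rfl

lemma length_mul_le_length_add_lengthIn (v : weylGroup C hC) {u : weylGroup C hC}
    (hu : u ∈ parabolic C hC J) : length C hC (v * u) ≤ length C hC v + lengthIn C hC J u :=
  (lengthIn_mul_le (mem_parabolic_univ v) (mem_parabolic_univ u)).trans
    (Nat.add_le_add_left (length_le_lengthIn hu) _)

end lengthIn

lemma exists_length_mul_simpleReflection {w : weylGroup C hC} (hw : w ≠ 1) :
    ∃ j, length C hC (w * simpleReflection C hC j) + 1 = length C hC w := by
  obtain ⟨j, -, hj⟩ := exists_lengthIn_mul_simpleReflection (mem_parabolic_univ w) hw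
  exact ⟨j, hj⟩

section Sign

variable {ε : weylGroup C hC →* ℤˣ} (hε : ∀ i, ε (simpleReflection C hC i) = -1)
include hε

lemma sign_wordProd (l : List I) : ε (wordProd C hC l) = (-1) ^ l.length := by
  induction l with
  | nil => simp
  | cons i l ih =>
    rw [← List.singleton_append, wordProd_append, map_mul, ih, wordProd_singleton, hε]
    simp [pow_succ']

lemma sign_eq_neg_one_pow_length (w : weylGroup C hC) : ε w = (-1) ^ length C hC w := by
  obtain ⟨l, -, hl, rfl⟩ := exists_reduced_word (mem_parabolic_univ w)
  rw [sign_wordProd hε, hl]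

lemma length_mul_simpleReflection_ne (w : weylGroup C hC) (i : I) :
    length C hC (w * simpleReflection C hC i) ≠ length C hC w := fun h => by
  have := map_mul ε w (simpleReflection C hC i)
  rw [sign_eq_neg_one_pow_length hε, sign_eq_neg_one_pow_length hε w, h, hε] at this
  simp at this

end Sign

/-! ### Dominance and the invariant form -/

def IsDominant (x : I → ℤ) : Prop := ∀ i, 0 ≤ x i

def IsStrictlyDominant (x : I → ℤ) : Prop := ∀ i, 0 < x i

instance [Fintype I] : DecidablePred (IsStrictlyDominant (I := I)) :=
  fun _ => Fintype.decidableForallFintype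

lemma IsStrictlyDominant.isDominant {x : I → ℤ} (hx : IsStrictlyDominant x) : IsDominant x :=
  fun i => (hx i).le

lemma isStrictlyDominant_rho : IsStrictlyDominant (rho : I → ℤ) := fun _ => Int.one_pos

variable (C) in
def posCone : AddSubmonoid (I → ℤ) := AddSubmonoid.closure (Set.range (simpleRoot C))

lemma simpleRoot_mem_posCone (i : I) : simpleRoot C i ∈ posCone C :=
  AddSubmonoid.subset_closure (Set.mem_range_self i)

lemma zsmul_mem_posCone {n : ℤ} (hn : 0 ≤ n) {x : I → ℤ} (hx : x ∈ posCone C) :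
    n • x ∈ posCone C := by
  lift n to ℕ using hn
  rw [natCast_zsmul]
  exact AddSubmonoid.nsmul_mem _ hx n

section Form

variable [Fintype I] [Fintype (weylGroup C hC)]

open Matrix in
variable (C hC) in
noncomputable def invariantForm : LinearMap.BilinForm ℤ (I → ℤ) :=
  ∑ w : weylGroup C hC, (dotProductBilin ℤ ℤ).compl₁₂ (DistribSMul.toLinearMap ℤ _ w)
    (DistribSMul.toLinearMap ℤ _ w)

open Matrix in
lemma invariantForm_apply (x y : I → ℤ) :
    invariantForm C hC x y = ∑ w : weylGroup C hC, (w • x) ⬝ᵥ (w • y) := by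
  simp [invariantForm, LinearMap.sum_apply, dotProductBilin]

lemma invariantForm_comm (x y : I → ℤ) : invariantForm C hC x y = invariantForm C hC y x := by
  simp only [invariantForm_apply, dotProduct_comm]

lemma invariantForm_smul_smul (u : weylGroup C hC) (x y : I → ℤ) :
    invariantForm C hC (u • x) (u • y) = invariantForm C hC x y := by
  simp only [invariantForm_apply, ← mul_smul]
  exact Fintype.sum_equiv (Equiv.mulRight u) _ _ fun _ => rfl

lemma invariantForm_self_nonneg (x : I → ℤ) : 0 ≤ invariantForm C hC x x := by
  rw [invariantForm_apply]
  exact Finset.sum_nonneg fun _ _ => Finset.sum_nonneg fun _ _ => mul_self_nonneg _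

lemma invariantForm_self_pos {x : I → ℤ} (hx : x ≠ 0) : 0 < invariantForm C hC x x := by
  rw [invariantForm_apply]
  calc 0 < x ⬝ᵥ x :=
        lt_of_le_of_ne (Finset.sum_nonneg fun _ _ => mul_self_nonneg _)
          (Ne.symm (dotProduct_self_eq_zero.not.2 hx))
    _ = (1 : weylGroup C hC) • x ⬝ᵥ (1 : weylGroup C hC) • x := by rw [one_smul]
    _ ≤ ∑ w : weylGroup C hC, (w • x) ⬝ᵥ (w • x) :=
        Finset.single_le_sum (f := fun w : weylGroup C hC => (w • x) ⬝ᵥ (w • x))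
          (fun _ _ => Finset.sum_nonneg fun _ _ => mul_self_nonneg _) (Finset.mem_univ 1)

lemma two_mul_invariantForm_simpleRoot (i : I) (x : I → ℤ) :
    2 * invariantForm C hC (simpleRoot C i) x =
      invariantForm C hC (simpleRoot C i) (simpleRoot C i) * x i := by
  have h := invariantForm_smul_smul (simpleReflection C hC i) (simpleRoot C i) x
  rw [simpleReflection_smul_simpleRoot, simpleReflection_smul] at h
  simp only [map_neg, map_sub, map_zsmul, LinearMap.neg_apply, smul_eq_mul] at h
  linear_combination -h

lemma invariantForm_simpleRoot_self_pos (i : I) :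
    0 < invariantForm C hC (simpleRoot C i) (simpleRoot C i) :=
  invariantForm_self_pos fun h => by simpa [simpleRoot, hC i] using congrFun h i

lemma invariantForm_simpleRoot_nonneg {i : I} {y : I → ℤ} (hy : 0 ≤ y i) :
    0 ≤ invariantForm C hC (simpleRoot C i) y := by
  have := two_mul_invariantForm_simpleRoot (hC := hC) i y
  have := invariantForm_simpleRoot_self_pos (hC := hC) i
  nlinarith

lemma invariantForm_simpleRoot_pos {i : I} {y : I → ℤ} (hy : 0 < y i) :
    0 < invariantForm C hC (simpleRoot C i) y := by
  have := two_mul_invariantForm_simpleRoot (hC := hC) i y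
  have := invariantForm_simpleRoot_self_pos (hC := hC) i
  nlinarith

include hC in
/-- With `v = 2α_i - C_ij α_j`, which pairs nontrivially with `e_i`, one has
`B(v, v) = B(α_i, α_i) (4 - C_ij C_ji)`. -/
lemma cartan_mul_lt_four [DecidableEq I] {i j : I} (hij : i ≠ j) : C i j * C j i < 4 := by
  have hij' := two_mul_invariantForm_simpleRoot (hC := hC) i (simpleRoot C j)
  have hji' := two_mul_invariantForm_simpleRoot (hC := hC) j (simpleRoot C i)
  have hi := two_mul_invariantForm_simpleRoot (hC := hC) i (Pi.single i 1)
  have hj := two_mul_invariantForm_simpleRoot (hC := hC) j (Pi.single i 1)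
  have hpos := invariantForm_simpleRoot_self_pos (hC := hC) i
  simp only [Pi.single_eq_same, Pi.single_eq_of_ne (Ne.symm hij), simpleRoot_apply]
    at hi hj hij' hji'
  set v := (2 : ℤ) • simpleRoot C i - C i j • simpleRoot C j
  have hvi : invariantForm C hC v (Pi.single i 1) =
      invariantForm C hC (simpleRoot C i) (simpleRoot C i) := by
    simp only [v, map_sub, map_zsmul, LinearMap.sub_apply, LinearMap.smul_apply, smul_eq_mul]
    linear_combination hi -
      C i j * (by linarith : invariantForm C hC (simpleRoot C j) (Pi.single i 1) = 0)
  have hvv : invariantForm C hC v v =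
      invariantForm C hC (simpleRoot C i) (simpleRoot C i) * (4 - C i j * C j i) := by
    simp only [v, map_sub, map_zsmul, LinearMap.sub_apply, LinearMap.smul_apply, smul_eq_mul]
    linear_combination (-C i j) * hij' - C i j * hji'
  have hv : v ≠ 0 := fun h => by
    rw [h, map_zero, LinearMap.zero_apply] at hvi
    exact hpos.ne hvi
  have := invariantForm_self_pos (hC := hC) hv
  nlinarith

lemma invariantForm_nonneg_of_mem_posCone {z y : I → ℤ} (hz : z ∈ posCone C)
    (hy : IsDominant y) : 0 ≤ invariantForm C hC z y := by
  induction hz using AddSubmonoid.closure_induction with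
  | mem _ h =>
    obtain ⟨i, rfl⟩ := h
    exact invariantForm_simpleRoot_nonneg (hy i)
  | zero => simp
  | add _ _ _ _ h₁ h₂ =>
    rw [map_add, LinearMap.add_apply]
    exact add_nonneg h₁ h₂

lemma eq_zero_of_mem_posCone_of_invariantForm_nonpos {z y : I → ℤ} (hz : z ∈ posCone C)
    (hy : IsStrictlyDominant y) (h : invariantForm C hC z y ≤ 0) : z = 0 := by
  obtain ⟨a, rfl⟩ := AddSubmonoid.mem_closure_range_iff_of_fintype.1 hz
  have hpos i := invariantForm_simpleRoot_pos (hC := hC) (hy i)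
  have hterm : ∀ i, 0 ≤ (a i : ℤ) * invariantForm C hC (simpleRoot C i) y :=
    fun i => mul_nonneg (Nat.cast_nonneg _) (hpos i).le
  have hsum : invariantForm C hC (∑ i, a i • simpleRoot C i) y =
      ∑ i, (a i : ℤ) * invariantForm C hC (simpleRoot C i) y := by
    rw [map_sum, LinearMap.sum_apply]
    exact Finset.sum_congr rfl fun i _ => by rw [map_nsmul, LinearMap.smul_apply, nsmul_eq_mul]
  have ha : ∀ i, a i = 0 := fun i => by
    have := (Finset.sum_eq_zero_iff_of_nonneg fun i _ => hterm i).1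
      (le_antisymm (hsum ▸ h) (Finset.sum_nonneg fun i _ => hterm i)) i (Finset.mem_univ i)
    simpa [(hpos i).ne'] using this
  simp [ha]

/-- A maximizer of `B(w x, ρ)` is dominant, since `s_i` lowers it by `x_i B(α_i, ρ)`. -/
lemma exists_isDominant_smul (x : I → ℤ) : ∃ w : weylGroup C hC, IsDominant (w • x) := by
  obtain ⟨w, -, hw⟩ := Finset.exists_max_image Finset.univ
    (fun w : weylGroup C hC => invariantForm C hC (w • x) rho) Finset.univ_nonempty
  refine ⟨w, fun i => ?_⟩
  have h := hw (simpleReflection C hC i * w) (Finset.mem_univ _)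
  rw [mul_smul, simpleReflection_smul, map_sub, map_zsmul, LinearMap.sub_apply,
    LinearMap.smul_apply, smul_eq_mul] at h
  have := invariantForm_simpleRoot_pos (hC := hC) (isStrictlyDominant_rho i)
  nlinarith

end Form

/-! ### Rank two -/

section RankTwo

variable (C hC) in
def altProd (a b : I) : ℕ → weylGroup C hC
  | 0 => 1
  | n + 1 => altProd b a n * simpleReflection C hC a

variable {J : Set I} {a b : I}

lemma altProd_succ_mul_self (n : ℕ) :
    altProd C hC a b (n + 1) * simpleReflection C hC a = altProd C hC b a n := by
  rw [altProd, mul_assoc, simpleReflection_mul_self, mul_one]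

lemma altProd_mem_parabolic (ha : a ∈ J) (hb : b ∈ J) (n : ℕ) :
    altProd C hC a b n ∈ parabolic C hC J := by
  induction n generalizing a b with
  | zero => exact one_mem _
  | succ n ih => exact mul_mem (ih hb ha) (simpleReflection_mem_parabolic ha)

lemma lengthIn_altProd_le (ha : a ∈ J) (hb : b ∈ J) (n : ℕ) :
    lengthIn C hC J (altProd C hC a b n) ≤ n := by
  induction n generalizing a b with
  | zero => exact lengthIn_le (l := []) (by simp) rfl
  | succ n ih =>
    exact (lengthIn_mul_simpleReflection_le (altProd_mem_parabolic hb ha n) ha).trans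
      (Nat.add_le_add_right (ih hb ha) 1)

lemma altProd_mul_simpleReflection_of_lengthIn_eq (ha : a ∈ J) (hb : b ∈ J) {k : I}
    (hk : k = a ∨ k = b) {n : ℕ}
    (h : lengthIn C hC J (altProd C hC a b n * simpleReflection C hC k) = n + 1) :
    altProd C hC a b n * simpleReflection C hC k = altProd C hC b a (n + 1) ∨
      altProd C hC a b n * simpleReflection C hC k = altProd C hC a b (n + 1) := by
  rcases hk with rfl | rfl
  · cases n with
    | zero => exact Or.inr rfl
    | succ m =>
      rw [altProd_succ_mul_self] at h
      have := lengthIn_altProd_le (C := C) (hC := hC) hb ha m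
      omega
  · exact Or.inl rfl

/-- A reduced `{i, j}`-word alternates. -/
lemma eq_altProd_of_mem_parabolic {i j : I} {u : weylGroup C hC}
    (hu : u ∈ parabolic C hC {i, j}) :
    u = altProd C hC i j (lengthIn C hC {i, j} u) ∨
      u = altProd C hC j i (lengthIn C hC {i, j} u) := by
  have hi : i ∈ ({i, j} : Set I) := by simp
  have hj : j ∈ ({i, j} : Set I) := by simp
  generalize hn : lengthIn C hC {i, j} u = n
  induction n generalizing u with
  | zero => exact Or.inl (eq_one_of_lengthIn_eq_zero hu hn)
  | succ n ih =>
    have hne : u ≠ 1 := by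
      rintro rfl
      simp at hn
    obtain ⟨k, hk, hlen⟩ := exists_lengthIn_mul_simpleReflection hu hne
    have hk' : k = i ∨ k = j := by simpa using hk
    have hu' : u = u * simpleReflection C hC k * simpleReflection C hC k := by
      rw [mul_assoc, simpleReflection_mul_self, mul_one]
    have ih' := ih (mul_mem hu (simpleReflection_mem_parabolic hk)) (by omega)
    rw [hu'] at hn ⊢
    rcases ih' with h | h <;> rw [h] at hn ⊢
    · exact (altProd_mul_simpleReflection_of_lengthIn_eq hi hj hk' hn).symm
    · exact altProd_mul_simpleReflection_of_lengthIn_eq hj hi hk'.symm hn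

lemma exists_altProd_mul_simpleReflection {M : ℕ} (hM : 0 < M)
    (hbraid : altProd C hC a b M = altProd C hC b a M) {n : ℕ} (hn : n ≤ M) {k : I}
    (hk : k = a ∨ k = b) :
    ∃ n' ≤ M, altProd C hC a b n * simpleReflection C hC k = altProd C hC a b n' ∨
      altProd C hC a b n * simpleReflection C hC k = altProd C hC b a n' := by
  rcases hk with rfl | rfl
  · cases n with
    | zero => exact ⟨1, hM, Or.inl rfl⟩
    | succ m => exact ⟨m, by omega, Or.inr (altProd_succ_mul_self m)⟩
  · rcases hn.lt_or_eq with hn | rfl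
    · exact ⟨n + 1, hn, Or.inr rfl⟩
    · obtain ⟨m, rfl⟩ := Nat.exists_eq_add_of_lt hM
      exact ⟨m, by omega, Or.inl (by rw [hbraid, zero_add, altProd_succ_mul_self])⟩

/-- Given the braid relation, the alternating products of length `≤ M` are closed under right
multiplication by `s_i` and `s_j`. -/
lemma lengthIn_le_of_altProd_eq {i j : I} {M : ℕ} (hM : 0 < M)
    (hbraid : altProd C hC i j M = altProd C hC j i M) {u : weylGroup C hC}
    (hu : u ∈ parabolic C hC {i, j}) : lengthIn C hC {i, j} u ≤ M := by
  have hi : i ∈ ({i, j} : Set I) := by simp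
  have hj : j ∈ ({i, j} : Set I) := by simp
  obtain ⟨l, hl, rfl⟩ := exists_wordProd_of_mem_parabolic hu
  suffices ∃ n ≤ M, wordProd C hC l = altProd C hC i j n ∨ wordProd C hC l = altProd C hC j i n by
    obtain ⟨n, hn, h | h⟩ := this <;> rw [h]
    · exact (lengthIn_altProd_le hi hj n).trans hn
    · exact (lengthIn_altProd_le hj hi n).trans hn
  clear hu
  induction l using List.reverseRecOn with
  | nil => exact ⟨0, hM.le, Or.inl rfl⟩
  | append_singleton l k ih =>
    have hk : k = i ∨ k = j := by simpa using hl k (by simp)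
    obtain ⟨n, hn, h | h⟩ := ih fun k hk => hl k (by simp [hk])
    · simp only [wordProd_append, wordProd_singleton, h]
      exact exists_altProd_mul_simpleReflection hM hbraid hn hk
    · simp only [wordProd_append, wordProd_singleton, h]
      obtain ⟨n', hn', h'⟩ := exists_altProd_mul_simpleReflection hM hbraid.symm hn hk.symm
      exact ⟨n', hn', h'.symm⟩

lemma smul_eq_of_mem_parabolic_pair {i j : I} {u : weylGroup C hC}
    (hu : u ∈ parabolic C hC {i, j}) {z : I → ℤ} (hzi : z i = 0) (hzj : z j = 0) : u • z = z := by
  suffices parabolic C hC {i, j} ≤ MulAction.stabilizer (weylGroup C hC) z from this hu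
  refine (Subgroup.closure_le _).2 ?_
  rintro _ ⟨k, hk, rfl⟩
  obtain rfl | rfl : k = i ∨ k = j := by simpa using hk
  all_goals simp [MulAction.mem_stabilizer_iff, simpleReflection_smul, hzi, hzj]

/-- As `C_ij C_ji ≠ 4`, `X` is spanned rationally by `α_i`, `α_j` and vectors vanishing at `i`
and `j`, which `W_{i,j}` fixes. -/
lemma eq_of_smul_simpleRoot_eq {i j : I} (h4 : C i j * C j i ≠ 4) {u v : weylGroup C hC}
    (hu : u ∈ parabolic C hC {i, j}) (hv : v ∈ parabolic C hC {i, j})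
    (hi : u • simpleRoot C i = v • simpleRoot C i)
    (hj : u • simpleRoot C j = v • simpleRoot C j) : u = v := by
  refine eq_of_smul_eq_smul fun x : I → ℤ =>
    smul_right_injective (I → ℤ) (sub_ne_zero.2 (Ne.symm h4)) ?_
  set z := (4 - C i j * C j i) • x - (2 * x i - C j i * x j) • simpleRoot C i -
    (2 * x j - C i j * x i) • simpleRoot C j
  have hzi : z i = 0 := by simp [z, hC i]; ring
  have hzj : z j = 0 := by simp [z, hC j]; ring
  have hx : (4 - C i j * C j i) • x = (2 * x i - C j i * x j) • simpleRoot C i +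
      (2 * x j - C i j * x i) • simpleRoot C j + z := by
    simp only [z]
    abel
  simp only [← smul_comm _ (4 - C i j * C j i), hx, smul_add, smul_comm _ (_ : ℤ), hi, hj,
    smul_eq_of_mem_parabolic_pair hu hzi hzj, smul_eq_of_mem_parabolic_pair hv hzi hzj]

variable (C) in
def rootComb (i j : I) (v : ℤ × ℤ) : I → ℤ := v.1 • simpleRoot C i + v.2 • simpleRoot C j

/-- `s_i` acting on the coefficients of `rootComb C i j`, where `d = C_ji`; `reflSnd c` is `s_j`,
where `c = C_ij`. -/
def reflFst (d : ℤ) (v : ℤ × ℤ) : ℤ × ℤ := (-v.1 - d * v.2, v.2)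

def reflSnd (c : ℤ) (v : ℤ × ℤ) : ℤ × ℤ := (v.1, -v.2 - c * v.1)

def altModel (f g : ℤ × ℤ → ℤ × ℤ) : ℕ → ℤ × ℤ → ℤ × ℤ
  | 0 => id
  | n + 1 => altModel g f n ∘ f

lemma simpleReflection_smul_rootComb_fst (i j : I) (v : ℤ × ℤ) :
    simpleReflection C hC i • rootComb C i j v = rootComb C i j (reflFst (C j i) v) := by
  ext k
  simp [rootComb, reflFst, simpleReflection_smul, hC i]
  ring

lemma simpleReflection_smul_rootComb_snd (i j : I) (v : ℤ × ℤ) :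
    simpleReflection C hC j • rootComb C i j v = rootComb C i j (reflSnd (C i j) v) := by
  ext k
  simp [rootComb, reflSnd, simpleReflection_smul, hC j]
  ring

lemma altProd_smul_rootComb {i j : I} {f g : ℤ × ℤ → ℤ × ℤ}
    (hf : ∀ v, simpleReflection C hC a • rootComb C i j v = rootComb C i j (f v))
    (hg : ∀ v, simpleReflection C hC b • rootComb C i j v = rootComb C i j (g v)) (n : ℕ)
    (v : ℤ × ℤ) : altProd C hC a b n • rootComb C i j v = rootComb C i j (altModel f g n v) := by
  induction n generalizing a b f g v with
  | zero => exact one_smul _ _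
  | succ n ih => rw [altProd, mul_smul, hf, ih hg hf]; rfl

/-- What is checked for `c = C_ij`, `d = C_ji`: the braid relation of length `M` holds on `α_i`
and `α_j`, and the alternating products `⋯ s_i s_j` of length `n < M` map `α_i` into
`ℕ α_i + ℕ α_j`. -/
def RankTwoData (c d : ℤ) (M : ℕ) : Prop :=
  0 < M ∧
  altModel (reflFst d) (reflSnd c) M (1, 0) = altModel (reflSnd c) (reflFst d) M (1, 0) ∧
  altModel (reflFst d) (reflSnd c) M (0, 1) = altModel (reflSnd c) (reflFst d) M (0, 1) ∧
  ∀ n < M, 0 ≤ (altModel (reflSnd c) (reflFst d) n (1, 0)).1 ∧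
    0 ≤ (altModel (reflSnd c) (reflFst d) n (1, 0)).2

instance (c d : ℤ) (M : ℕ) : Decidable (RankTwoData c d M) := by
  unfold RankTwoData
  infer_instance

lemma exists_rankTwoData {c d : ℤ} (hc : c ≤ 0) (hd : d ≤ 0) (hcd : c = 0 ↔ d = 0)
    (h4 : c * d < 4) : ∃ M, RankTwoData c d M := by
  have hc3 : -3 ≤ c := by
    by_contra h
    have : d ≠ 0 := fun h0 => by simp_all
    nlinarith [show d ≤ -1 by omega]
  have hd3 : -3 ≤ d := by
    by_contra h
    have : c ≠ 0 := fun h0 => by simp_all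
    nlinarith [show c ≤ -1 by omega]
  suffices ∃ M, M < 7 ∧ RankTwoData c d M from this.imp fun _ => And.right
  interval_cases c <;> interval_cases d <;> first | omega | decide

variable [Fintype I] [DecidableEq I] [Fintype (weylGroup C hC)]
  (hC0 : ∀ i j, i ≠ j → C i j ≤ 0) (hCsym : ∀ i j, C i j = 0 ↔ C j i = 0)
include hC0 hCsym

lemma exists_braid_and_nonneg {i j : I} (hij : i ≠ j) :
    ∃ M, 0 < M ∧ altProd C hC i j M = altProd C hC j i M ∧
      ∀ n < M, ∃ v : ℤ × ℤ, 0 ≤ v.1 ∧ 0 ≤ v.2 ∧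
        altProd C hC j i n • simpleRoot C i = rootComb C i j v := by
  have h4 := cartan_mul_lt_four (hC := hC) hij
  obtain ⟨M, hM, hbraid_i, hbraid_j, hpos⟩ :=
    exists_rankTwoData (hC0 i j hij) (hC0 j i hij.symm) (hCsym i j) h4
  have hfst := simpleReflection_smul_rootComb_fst (hC := hC) i j
  have hsnd := simpleReflection_smul_rootComb_snd (hC := hC) i j
  have hαi : simpleRoot C i = rootComb C i j (1, 0) := by simp [rootComb]
  have hαj : simpleRoot C j = rootComb C i j (0, 1) := by simp [rootComb]
  have hmem : ∀ a b, a ∈ ({i, j} : Set I) → b ∈ ({i, j} : Set I) →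
      altProd C hC a b M ∈ parabolic C hC {i, j} := fun a b ha hb => altProd_mem_parabolic ha hb M
  refine ⟨M, hM, eq_of_smul_simpleRoot_eq h4.ne (hmem _ _ (by simp) (by simp))
    (hmem _ _ (by simp) (by simp)) ?_ ?_, fun n hn => ⟨_, (hpos n hn).1, (hpos n hn).2, ?_⟩⟩
  · rw [hαi, altProd_smul_rootComb hfst hsnd, altProd_smul_rootComb hsnd hfst, hbraid_i]
  · rw [hαj, altProd_smul_rootComb hfst hsnd, altProd_smul_rootComb hsnd hfst, hbraid_j]
  · rw [hαi, altProd_smul_rootComb hsnd hfst]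

/-- `u` is an alternating product of length `ℓ_{i,j}(u) ≤ M`; it cannot end with `s_i`, nor have
length `M`, where the braid relation lets it end with `s_i`. -/
theorem exists_smul_simpleRoot_eq_rootComb {i j : I} (hij : i ≠ j) {u : weylGroup C hC}
    (hu : u ∈ parabolic C hC {i, j})
    (h : lengthIn C hC {i, j} u < lengthIn C hC {i, j} (u * simpleReflection C hC i)) :
    ∃ v : ℤ × ℤ, 0 ≤ v.1 ∧ 0 ≤ v.2 ∧ u • simpleRoot C i = rootComb C i j v := by
  obtain ⟨M, hM, hbraid, hpos⟩ := exists_braid_and_nonneg hC0 hCsym hij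
  have hi : i ∈ ({i, j} : Set I) := by simp
  have hj : j ∈ ({i, j} : Set I) := by simp
  have hone : u = altProd C hC i j (lengthIn C hC {i, j} u) → u = 1 := by
    intro hu'
    rcases hn : lengthIn C hC {i, j} u with _ | n
    · rwa [hn] at hu'
    · rw [hn] at hu'
      have := lengthIn_altProd_le (C := C) (hC := hC) hj hi n
      rw [← altProd_succ_mul_self, ← hu'] at this
      omega
  have hone_smul : u = 1 → ∃ v : ℤ × ℤ, 0 ≤ v.1 ∧ 0 ≤ v.2 ∧
      u • simpleRoot C i = rootComb C i j v := by
    rintro rfl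
    exact ⟨(1, 0), zero_le_one, le_rfl, by simp [rootComb]⟩
  rcases eq_altProd_of_mem_parabolic hu with hu' | hu'
  · exact hone_smul (hone hu')
  · rcases (lengthIn_le_of_altProd_eq hM hbraid hu).lt_or_eq with hlt | heq
    · rw [hu']
      exact hpos _ hlt
    · exact hone_smul (hone (hu'.trans (by rw [heq, hbraid])))

end RankTwo

/-! ### Positivity of roots -/

lemma exists_minimal_factorization (J : Set I) (w : weylGroup C hC) :
    ∃ v u, u ∈ parabolic C hC J ∧ v * u = w ∧ length C hC v + lengthIn C hC J u = length C hC w ∧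
      ∀ v' u', u' ∈ parabolic C hC J → v' * u' = w →
        length C hC v' + lengthIn C hC J u' = length C hC w → length C hC v ≤ length C hC v' := by
  classical
  have hP : ∃ n, ∃ v u, u ∈ parabolic C hC J ∧ v * u = w ∧
      length C hC v + lengthIn C hC J u = length C hC w ∧ length C hC v = n :=
    ⟨_, w, 1, one_mem _, mul_one w, by simp, rfl⟩
  obtain ⟨v, u, hu, hvu, hlen, hv⟩ := Nat.find_spec hP
  exact ⟨v, u, hu, hvu, hlen, fun v' u' hu' hvu' hlen' =>
    hv ▸ Nat.find_min' hP ⟨v', u', hu', hvu', hlen', rfl⟩⟩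

/-- Otherwise `w = (v s_k)(s_k u)` would be a factorization with a shorter first factor. -/
lemma length_lt_length_mul_of_minimal {ε : weylGroup C hC →* ℤˣ}
    (hε : ∀ i, ε (simpleReflection C hC i) = -1) {J : Set I} {v u : weylGroup C hC}
    (hu : u ∈ parabolic C hC J) (hlen : length C hC v + lengthIn C hC J u = length C hC (v * u))
    (hmin : ∀ v' u', u' ∈ parabolic C hC J → v' * u' = v * u →
      length C hC v' + lengthIn C hC J u' = length C hC (v * u) → length C hC v ≤ length C hC v')
    {k : I} (hk : k ∈ J) : length C hC v < length C hC (v * simpleReflection C hC k) := by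
  refine (length_mul_simpleReflection_ne hε v k).symm.lt_of_le (not_lt.1 fun hlt => ?_)
  have hsku := mul_mem (simpleReflection_mem_parabolic (C := C) (hC := hC) hk) hu
  have hvu : v * simpleReflection C hC k * (simpleReflection C hC k * u) = v * u := by
    rw [mul_assoc, ← mul_assoc (simpleReflection C hC k), simpleReflection_mul_self, one_mul]
  have h₁ := lengthIn_simpleReflection_mul_le hu hk
  have h₂ := length_mul_le_length_add_lengthIn (v * simpleReflection C hC k) hsku
  rw [hvu] at h₂
  have := hmin _ _ hsku hvu (by omega)
  omega

section Positivity

variable [Fintype I] [DecidableEq I] [Fintype (weylGroup C hC)]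
  (hC0 : ∀ i j, i ≠ j → C i j ≤ 0) (hCsym : ∀ i j, C i j = 0 ↔ C j i = 0)
  {ε : weylGroup C hC →* ℤˣ} (hε : ∀ i, ε (simpleReflection C hC i) = -1)
include hC0 hCsym hε

/-- Factor `w = v u` with `u ∈ W_{i,j}` and `v` of minimal length, where `s_j` ends a reduced
word for `w`: then `v α_i`, `v α_j` are positive by induction, and `u α_i ∈ ℕ α_i + ℕ α_j` by the
rank-two case. -/
theorem smul_simpleRoot_mem_posCone (w : weylGroup C hC) (i : I)
    (h : length C hC w < length C hC (w * simpleReflection C hC i)) :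
    w • simpleRoot C i ∈ posCone C := by
  induction hn : length C hC w using Nat.strong_induction_on generalizing w i with
  | _ n ih =>
  by_cases hw : w = 1
  · rw [hw, one_smul]
    exact simpleRoot_mem_posCone i
  obtain ⟨j, hj⟩ := exists_length_mul_simpleReflection hw
  have hij : i ≠ j := by
    rintro rfl
    omega
  have hiJ : i ∈ ({i, j} : Set I) := by simp
  have hjJ : j ∈ ({i, j} : Set I) := by simp
  obtain ⟨v, u, hu, rfl, hlen, hmin⟩ := exists_minimal_factorization {i, j} w
  have hvn : length C hC v < n := by
    have hvu : v * u * simpleReflection C hC j * simpleReflection C hC j = v * u := by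
      simp [mul_assoc]
    have hsj := simpleReflection_mem_parabolic (C := C) (hC := hC) hjJ
    have h₁ := lengthIn_simpleReflection_le (C := C) (hC := hC) hjJ
    have h₂ := length_mul_le_length_add_lengthIn (v * u * simpleReflection C hC j) hsj
    rw [hvu] at h₂
    have := hmin _ _ hsj hvu (by omega)
    omega
  have hu' : lengthIn C hC {i, j} u < lengthIn C hC {i, j} (u * simpleReflection C hC i) := by
    have := length_mul_le_length_add_lengthIn v
      (mul_mem hu (simpleReflection_mem_parabolic (C := C) (hC := hC) hiJ))
    rw [← mul_assoc] at this
    omega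
  obtain ⟨c, hc₁, hc₂, hc⟩ := exists_smul_simpleRoot_eq_rootComb hC0 hCsym hij hu hu'
  rw [mul_smul, hc, rootComb, smul_add, smul_comm, smul_comm v c.2]
  exact add_mem
    (zsmul_mem_posCone hc₁ (ih _ hvn v i (length_lt_length_mul_of_minimal hε hu hlen hmin hiJ) rfl))
    (zsmul_mem_posCone hc₂ (ih _ hvn v j (length_lt_length_mul_of_minimal hε hu hlen hmin hjJ) rfl))

theorem sub_smul_mem_posCone {μ : I → ℤ} (hμ : IsDominant μ) (w : weylGroup C hC) :
    μ - w • μ ∈ posCone C := by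
  induction hn : length C hC w using Nat.strong_induction_on generalizing w with
  | _ n ih =>
  by_cases hw : w = 1
  · simp [hw, zero_mem]
  obtain ⟨j, hj⟩ := exists_length_mul_simpleReflection hw
  set v := w * simpleReflection C hC j
  have hvw : v * simpleReflection C hC j = w := by simp [v, mul_assoc]
  have hpos := smul_simpleRoot_mem_posCone hC0 hCsym hε v j (by rw [hvw]; omega)
  have hsplit : μ - w • μ = (μ - v • μ) + μ j • (v • simpleRoot C j) := by
    rw [← hvw, mul_smul, simpleReflection_smul, smul_sub, smul_comm]
    abel
  rw [hsplit]
  exact add_mem (ih _ (by omega) v rfl) (zsmul_mem_posCone (hμ j) hpos)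

lemma invariantForm_smul_le {μ y : I → ℤ} (hμ : IsDominant μ) (hy : IsStrictlyDominant y)
    (w : weylGroup C hC) : invariantForm C hC (w • μ) y ≤ invariantForm C hC μ y := by
  have := invariantForm_nonneg_of_mem_posCone (hC := hC) (sub_smul_mem_posCone hC0 hCsym hε hμ w)
    hy.isDominant
  rw [map_sub, LinearMap.sub_apply] at this
  omega

lemma smul_eq_of_invariantForm_le {μ y : I → ℤ} (hμ : IsDominant μ) (hy : IsStrictlyDominant y)
    {w : weylGroup C hC} (h : invariantForm C hC μ y ≤ invariantForm C hC (w • μ) y) :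
    w • μ = μ := by
  refine (sub_eq_zero.1 (eq_zero_of_mem_posCone_of_invariantForm_nonpos
    (sub_smul_mem_posCone hC0 hCsym hε hμ w) hy ?_)).symm
  rw [map_sub, LinearMap.sub_apply]
  omega

lemma smul_eq_self_of_isDominant {μ : I → ℤ} (hμ : IsDominant μ) {w : weylGroup C hC}
    (hwμ : IsDominant (w • μ)) : w • μ = μ := by
  refine smul_eq_of_invariantForm_le hC0 hCsym hε hμ isStrictlyDominant_rho ?_
  simpa using invariantForm_smul_le hC0 hCsym hε hwμ isStrictlyDominant_rho w⁻¹

/-- `w` fixes every dominant `x`, as `B(w x, μ) = B(x, μ)`, and dominant vectors span `X`. -/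
lemma eq_one_of_smul_eq {μ : I → ℤ} (hμ : IsStrictlyDominant μ) {w : weylGroup C hC}
    (h : w • μ = μ) : w = 1 := by
  have hdom : ∀ x, IsDominant x → w • x = x := fun x hx =>
    smul_eq_of_invariantForm_le hC0 hCsym hε hx hμ
      (by rw [← invariantForm_smul_smul w x μ, h])
  refine eq_of_smul_eq_smul fun x : I → ℤ => ?_
  set c := ∑ k, |x k|
  have hc : IsDominant (c • (rho : I → ℤ)) := fun k => by
    simpa [rho] using Finset.sum_nonneg fun k _ => abs_nonneg (x k)
  have hxc : IsDominant (x + c • (rho : I → ℤ)) := fun k => by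
    have := Finset.single_le_sum (fun k _ => abs_nonneg (x k)) (Finset.mem_univ k)
    simp only [Pi.add_apply, Pi.smul_apply, rho, smul_eq_mul, mul_one]
    linarith [neg_abs_le (x k)]
  have := congrArg₂ (· - ·) (hdom _ hxc) (hdom _ hc)
  simpa [← smul_sub] using this

end Positivity

/-! ### The group algebra -/

section Algebra

open AddMonoidAlgebra

variable (C hC) in
noncomputable def algAction (w : weylGroup C hC) :
    AddMonoidAlgebra ℤ (I → ℤ) ≃ₐ[ℤ] AddMonoidAlgebra ℤ (I → ℤ) :=
  domCongr ℤ ℤ (w : AddAut (I → ℤ))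

lemma coeff_algAction (w : weylGroup C hC) (f : AddMonoidAlgebra ℤ (I → ℤ)) :
    (algAction C hC w f).coeff = Finsupp.mapDomain (w : AddAut (I → ℤ)) f.coeff :=
  rfl

lemma algAction_single (w : weylGroup C hC) (x : I → ℤ) (c : ℤ) :
    algAction C hC w (single x c) = single (w • x) c :=
  domCongr_single _ _ _

lemma coeff_algAction_smul (w : weylGroup C hC) (f : AddMonoidAlgebra ℤ (I → ℤ)) (x : I → ℤ) :
    (algAction C hC w f).coeff (w • x) = f.coeff x := by
  simp [algAction, smul_def]

variable (C hC) in
def IsAntiInvariant (ε : weylGroup C hC →* ℤˣ) (f : AddMonoidAlgebra ℤ (I → ℤ)) : Prop :=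
  ∀ w, algAction C hC w f = (ε w : ℤ) • f

variable {ε : weylGroup C hC →* ℤˣ}

lemma IsAntiInvariant.coeff_smul {f : AddMonoidAlgebra ℤ (I → ℤ)}
    (hf : IsAntiInvariant C hC ε f) (w : weylGroup C hC) (x : I → ℤ) :
    f.coeff (w • x) = ε w * f.coeff x := by
  rw [← coeff_algAction_smul w f x, hf, coeff_smul_apply, smul_eq_mul, ← mul_assoc,
    ← Units.val_mul, Int.units_mul_self, Units.val_one, one_mul]

lemma IsAntiInvariant.coeff_eq_zero_of_apply_eq_zero (hε : ∀ i, ε (simpleReflection C hC i) = -1)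
    {f : AddMonoidAlgebra ℤ (I → ℤ)} (hf : IsAntiInvariant C hC ε f) {μ : I → ℤ} {k : I}
    (hk : μ k = 0) : f.coeff μ = 0 := by
  have := hf.coeff_smul (simpleReflection C hC k) μ
  rw [simpleReflection_smul, hk, zero_smul, sub_zero, hε] at this
  simp only [Units.val_neg, Units.val_one, neg_mul, one_mul] at this
  omega

section Numerator

variable [Fintype (weylGroup C hC)]

lemma weylNumerator_eq (ζ : I → ℤ) :
    weylNumerator C hC ε ζ = ∑ w : weylGroup C hC, (ε w : ℤ) • single (w • ζ) 1 := rfl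

lemma isAntiInvariant_weylNumerator (ζ : I → ℤ) :
    IsAntiInvariant C hC ε (weylNumerator C hC ε ζ) := fun u => by
  rw [weylNumerator_eq, map_sum, Finset.smul_sum]
  refine Fintype.sum_equiv (Equiv.mulLeft u) _ _ fun w => ?_
  rw [map_zsmul, algAction_single, Equiv.coe_mulLeft, map_mul, Units.val_mul, smul_smul (ε u : ℤ),
    ← mul_assoc, ← Units.val_mul, Int.units_mul_self, Units.val_one, one_mul, mul_smul]

variable [Fintype I]

lemma coeff_weylNumerator (ζ μ : I → ℤ) :
    (weylNumerator C hC ε ζ).coeff μ =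
      ∑ w : weylGroup C hC, if w • ζ = μ then (ε w : ℤ) else 0 := by
  simp [weylNumerator_eq, Finsupp.single_apply]

lemma coeff_weylNumerator_eq_zero {ζ μ : I → ℤ} (h : ∀ w : weylGroup C hC, w • ζ ≠ μ) :
    (weylNumerator C hC ε ζ).coeff μ = 0 := by
  rw [coeff_weylNumerator]
  exact Finset.sum_eq_zero fun w _ => if_neg (h w)

variable (C hC) in
noncomputable def orbitFinset (ν : I → ℤ) : Finset (I → ℤ) :=
  Finset.univ.image fun w : weylGroup C hC => w • ν

lemma mem_orbitFinset {ν μ : I → ℤ} :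
    μ ∈ orbitFinset C hC ν ↔ ∃ w : weylGroup C hC, w • ν = μ := by
  simp only [orbitFinset, Finset.mem_image, Finset.mem_univ, true_and]

lemma smul_mem_orbitFinset {ν μ : I → ℤ} (hμ : μ ∈ orbitFinset C hC ν) (w : weylGroup C hC) :
    w • μ ∈ orbitFinset C hC ν := by
  obtain ⟨v, rfl⟩ := mem_orbitFinset.1 hμ
  exact mem_orbitFinset.2 ⟨w * v, mul_smul w v ν⟩

variable (C hC) in
noncomputable def orbitSum (ν : I → ℤ) : AddMonoidAlgebra ℤ (I → ℤ) :=
  ∑ μ ∈ orbitFinset C hC ν, single μ 1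

lemma algAction_orbitSum (w : weylGroup C hC) (ν : I → ℤ) :
    algAction C hC w (orbitSum C hC ν) = orbitSum C hC ν := by
  rw [orbitSum, map_sum]
  simp_rw [algAction_single]
  exact Finset.sum_nbij' (w • ·) (w⁻¹ • ·) (fun μ hμ => smul_mem_orbitFinset hμ w)
    (fun μ hμ => smul_mem_orbitFinset hμ w⁻¹) (fun μ _ => inv_smul_smul w μ)
    (fun μ _ => smul_inv_smul w μ) fun _ _ => rfl

lemma coeff_weylNumerator_rho_mul_orbitSum (ν x : I → ℤ) :
    (weylNumerator C hC ε rho * orbitSum C hC ν).coeff x =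
      ∑ w : weylGroup C hC, ∑ μ ∈ orbitFinset C hC ν,
        if w • rho + μ = x then (ε w : ℤ) else 0 := by
  simp only [weylNumerator_eq, orbitSum, Finset.sum_mul, Finset.mul_sum, smul_mul_assoc,
    single_mul_single, mul_one, coeff_sum, coeff_smul, coeff_single, Finsupp.coe_finsetSum,
    Finset.sum_apply, Finsupp.smul_apply, Finsupp.single_apply, smul_eq_mul, mul_ite, mul_zero]
  exact Finset.sum_comm

lemma exists_eq_add_of_coeff_ne_zero {ν x : I → ℤ}
    (h : (weylNumerator C hC ε rho * orbitSum C hC ν).coeff x ≠ 0) :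
    ∃ w w' : weylGroup C hC, x = w • rho + w' • ν := by
  by_contra hx
  simp only [not_exists] at hx
  refine h ?_
  rw [coeff_weylNumerator_rho_mul_orbitSum]
  refine Finset.sum_eq_zero fun w _ => Finset.sum_eq_zero fun μ hμ => if_neg ?_
  obtain ⟨w', rfl⟩ := mem_orbitFinset.1 hμ
  exact fun h => hx w w' h.symm

end Numerator

section Division

variable [Fintype I] [DecidableEq I] [Fintype (weylGroup C hC)]
  (hC0 : ∀ i j, i ≠ j → C i j ≤ 0) (hCsym : ∀ i j, C i j = 0 ↔ C j i = 0)
  (hε : ∀ i, ε (simpleReflection C hC i) = -1)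
include hC0 hCsym hε

lemma coeff_weylNumerator_smul {ζ : I → ℤ} (hζ : IsStrictlyDominant ζ) (u : weylGroup C hC) :
    (weylNumerator C hC ε ζ).coeff (u • ζ) = ε u := by
  rw [coeff_weylNumerator, Finset.sum_eq_single u (fun w _ hw => if_neg fun h => hw ?_)
    (by simp), if_pos rfl]
  have := eq_one_of_smul_eq hC0 hCsym hε hζ (w := u⁻¹ * w) (by rw [mul_smul, h, inv_smul_smul])
  rwa [inv_mul_eq_one, eq_comm] at this

/-- Both sides vanish off the orbit of the dominant `μ' = u μ`: the left one if `μ'` lies on a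
wall, the right one since `μ'` is the only dominant weight of its orbit. -/
theorem IsAntiInvariant.eq_sum_weylNumerator {f : AddMonoidAlgebra ℤ (I → ℤ)}
    (hf : IsAntiInvariant C hC ε f) :
    f = ∑ ζ ∈ f.coeff.support.filter IsStrictlyDominant, f.coeff ζ • weylNumerator C hC ε ζ := by
  ext μ
  obtain ⟨u, hu⟩ := exists_isDominant_smul (hC := hC) μ
  set μ' := u • μ
  have hμ : μ = u⁻¹ • μ' := (inv_smul_smul u μ).symm
  have hvanish : ¬ IsStrictlyDominant μ' → f.coeff μ' = 0 := fun h => by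
    obtain ⟨k, hk⟩ : ∃ k, ¬ 0 < μ' k := by simpa [IsStrictlyDominant] using h
    exact hf.coeff_eq_zero_of_apply_eq_zero hε (le_antisymm (not_lt.1 hk) (hu k))
  rw [coeff_sum, Finset.sum_apply', Finset.sum_eq_single μ']
  · rw [coeff_smul_apply, smul_eq_mul, hμ, hf.coeff_smul]
    by_cases hsd : IsStrictlyDominant μ'
    · rw [coeff_weylNumerator_smul hC0 hCsym hε hsd, mul_comm]
    · rw [hvanish hsd, mul_zero, zero_mul]
  · intro ζ hζ hne
    rw [coeff_smul_apply, coeff_weylNumerator_eq_zero, smul_zero]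
    intro w hw
    have hζd := (Finset.mem_filter.1 hζ).2.isDominant
    have := smul_eq_self_of_isDominant hC0 hCsym hε hζd (w := u * w) (by rwa [mul_smul, hw])
    exact hne (this.symm.trans (by rw [mul_smul, hw]))
  · intro hnot
    have : f.coeff μ' = 0 := by
      by_contra h0
      exact hnot (Finset.mem_filter.2 ⟨Finsupp.mem_support_iff.2 h0, not_not.1 (mt hvanish h0)⟩)
    rw [coeff_smul_apply, this, zero_smul]

lemma smul_rho_eq_of_add_eq {ν : I → ℤ} (hν : IsDominant ν) {w w' : weylGroup C hC}
    (h : w • rho + w' • ν = rho + ν) : w • (rho : I → ℤ) = rho := by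
  have hy : IsStrictlyDominant (rho + ν) := fun k => by
    have := hν k
    simp only [Pi.add_apply, rho]
    omega
  have h₁ := invariantForm_smul_le hC0 hCsym hε isStrictlyDominant_rho.isDominant hy w
  have h₂ := invariantForm_smul_le hC0 hCsym hε hν hy w'
  have h₃ : invariantForm C hC (w • rho + w' • ν) (rho + ν) =
      invariantForm C hC (rho + ν) (rho + ν) := by
    rw [h]
  rw [LinearMap.map_add₂, LinearMap.map_add₂] at h₃
  exact smul_eq_of_invariantForm_le hC0 hCsym hε isStrictlyDominant_rho.isDominant hy (by omega)

lemma coeff_weylNumerator_rho_mul_orbitSum_self {ν : I → ℤ} (hν : IsDominant ν) :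
    (weylNumerator C hC ε rho * orbitSum C hC ν).coeff (rho + ν) = 1 := by
  rw [coeff_weylNumerator_rho_mul_orbitSum, Finset.sum_eq_single 1, Finset.sum_eq_single ν]
  · rw [if_pos (by rw [one_smul]), map_one, Units.val_one]
  · intro μ _ hμ
    have : (1 : weylGroup C hC) • rho + μ ≠ rho + ν := fun h =>
      hμ (add_left_cancel (by rwa [one_smul] at h))
    exact if_neg this
  · exact fun h => (h (mem_orbitFinset.2 ⟨1, one_smul _ ν⟩)).elim
  · intro w _ hw
    refine Finset.sum_eq_zero fun μ hμ => if_neg fun h => hw ?_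
    obtain ⟨w', rfl⟩ := mem_orbitFinset.1 hμ
    exact eq_one_of_smul_eq hC0 hCsym hε isStrictlyDominant_rho
      (smul_rho_eq_of_add_eq hC0 hCsym hε hν h)
  · exact fun h => (h (Finset.mem_univ 1)).elim

/-- `ζ = w ρ + w' ν` gives `B(ζ, ζ) ≤ B(ρ + ν, ζ)`, and `B(ρ + ν - ζ, ρ + ν - ζ) > 0`. -/
lemma invariantForm_self_lt_of_coeff_ne_zero {ν ζ : I → ℤ} (hν : IsDominant ν)
    (hζ : IsStrictlyDominant ζ) (h : (weylNumerator C hC ε rho * orbitSum C hC ν).coeff ζ ≠ 0)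
    (hne : ζ ≠ rho + ν) : invariantForm C hC ζ ζ < invariantForm C hC (rho + ν) (rho + ν) := by
  obtain ⟨w, w', hζw⟩ := exists_eq_add_of_coeff_ne_zero h
  have h₁ := invariantForm_smul_le hC0 hCsym hε isStrictlyDominant_rho.isDominant hζ w
  have h₂ := invariantForm_smul_le hC0 hCsym hε hν hζ w'
  have h₃ := invariantForm_self_pos (hC := hC) (sub_ne_zero.2 hne.symm)
  have h₄ := invariantForm_comm (hC := hC) (rho + ν) ζ
  have h₅ : invariantForm C hC ζ ζ =
      invariantForm C hC (w • rho) ζ + invariantForm C hC (w' • ν) ζ := by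
    nth_rewrite 1 [hζw]
    rw [LinearMap.map_add₂]
  simp only [map_sub, map_add, LinearMap.sub_apply, LinearMap.add_apply] at h₃ h₄ ⊢
  linarith

theorem exists_weylNumerator_rho_mul_eq {μ : I → ℤ} (hμ : IsStrictlyDominant μ) :
    ∃ q, weylNumerator C hC ε rho * q = weylNumerator C hC ε μ ∧ ∀ w, algAction C hC w q = q := by
  induction hn : (invariantForm C hC μ μ).toNat using Nat.strong_induction_on generalizing μ with
  | _ n ih =>
  set ν := μ - rho
  have hν : IsDominant ν := fun k => by
    have := hμ k
    simp only [ν, Pi.sub_apply, rho]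
    omega
  have hμν : rho + ν = μ := add_sub_cancel _ _
  set P := weylNumerator C hC ε rho * orbitSum C hC ν
  have hP : IsAntiInvariant C hC ε P := fun w => by
    rw [map_mul, isAntiInvariant_weylNumerator, algAction_orbitSum, smul_mul_assoc]
  set S := P.coeff.support.filter IsStrictlyDominant
  have hPμ : P.coeff μ = 1 := hμν ▸ coeff_weylNumerator_rho_mul_orbitSum_self hC0 hCsym hε hν
  have hμS : μ ∈ S := Finset.mem_filter.2 ⟨by simp [hPμ], hμ⟩
  have hrec : ∀ ζ ∈ S.erase μ, ∃ q, weylNumerator C hC ε rho * q = weylNumerator C hC ε ζ ∧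
      ∀ w, algAction C hC w q = q := by
    intro ζ hζ
    obtain ⟨hne, hPζ, hζ⟩ := And.imp_right Finset.mem_filter.1 (Finset.mem_erase.1 hζ)
    have := invariantForm_self_lt_of_coeff_ne_zero hC0 hCsym hε hν hζ
      (Finsupp.mem_support_iff.1 hPζ) (hμν ▸ hne)
    have := invariantForm_self_nonneg (hC := hC) ζ
    exact ih _ (by rw [hμν] at *; omega) hζ rfl
  choose! q hq hqinv using hrec
  refine ⟨orbitSum C hC ν - ∑ ζ ∈ S.erase μ, P.coeff ζ • q ζ, ?_, fun w => ?_⟩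
  · have hdecomp := hP.eq_sum_weylNumerator hC0 hCsym hε
    rw [← Finset.add_sum_erase S _ hμS, hPμ, one_smul] at hdecomp
    rw [mul_sub, Finset.mul_sum, Finset.sum_congr rfl fun ζ hζ => by rw [mul_smul_comm, hq ζ hζ]]
    exact sub_eq_iff_eq_add.2 hdecomp
  · rw [map_sub, algAction_orbitSum, map_sum,
      Finset.sum_congr rfl fun ζ hζ => by rw [map_zsmul, hqinv ζ hζ]]

end Division

end Algebra

end WeylCharacter

/-- Weyl character formula: for strictly dominant `ζ ∈ X^{++}`, the Weyl
numerator `Σ_{w∈W} ε_w e^{w(ζ)}` is divisible in `ℤ[X]` by the Weyl denominator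
`Σ_{w∈W} ε_w e^{w(ρ)}`, and the quotient `S⁰_ζ` is `W`-invariant.  Here `C` is the
Cartan matrix of a reduced root system with finite Weyl group `W`, `ε` the sign
character (`ε(s_i) = −1`), and `ρ` (the half-sum of positive roots) is the all-ones
vector in fundamental-weight coordinates. -/
theorem weyl_quotient_exists {I : Type*} [Fintype I] [DecidableEq I]
    (C : Matrix I I ℤ) (hC : ∀ i, C i i = 2)
    (hC0 : ∀ i j, i ≠ j → C i j ≤ 0) (hCsym : ∀ i j, C i j = 0 ↔ C j i = 0)
    [Fintype (weylGroup C hC)]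
    (ε : weylGroup C hC →* ℤˣ)
    (hε : ∀ i, ε ⟨simpleRefl C hC i, Subgroup.subset_closure (Set.mem_range_self i)⟩ = -1)
    (ζ : I → ℤ) (hζ : ∀ i, 1 ≤ ζ i) :
    ∃ q : AddMonoidAlgebra ℤ (I → ℤ),
      weylNumerator C hC ε rho * q = weylNumerator C hC ε ζ ∧
      ∀ w : weylGroup C hC,
        Finsupp.mapDomain ((w : AddAut (I → ℤ)) : (I → ℤ) → (I → ℤ)) q.coeff = q.coeff := by
  obtain ⟨q, hq, hinv⟩ := WeylCharacter.exists_weylNumerator_rho_mul_eq hC0 hCsym hε hζ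
  exact ⟨q, hq, fun w => by rw [← WeylCharacter.coeff_algAction, hinv w]⟩
end
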